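/- arXiv:1609.07301 — 8 statements merged into one kernel-verified Lean document; each statement's English description precedes it below -/
import Mathlib

section
/- For every natural number p and every real number z with |z| < 1, the exponential generating function of the unsigned Stirling numbers of the first kind satisfies ∑_{n=0}^∞ c(n,p)·z^n/n! = (-log(1-z))^p / p!. -/
/-- Unsigned Stirling numbers of the first kind. -/
def stirling1 : ℕ → ℕ → ℕ
  | 0, 0 => 1
  | 0, _ + 1 => 0
  | _ + 1, 0 => 0
  | n + 1, k + 1 => n * stirling1 n (k + 1) + stirling1 n k

/-- Stirling numbers of the second kind. -/
def stirling2 : ℕ → ℕ → ℕ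
  | 0, 0 => 1
  | 0, _ + 1 => 0
  | _ + 1, 0 => 0
  | n + 1, k + 1 => (k + 1) * stirling2 n (k + 1) + stirling2 n k

/-- First-order Eulerian numbers. -/
def eulerian : ℕ → ℕ → ℕ
  | 0, 0 => 1
  | 0, _ + 1 => 0
  | n + 1, 0 => eulerian n 0
  | n + 1, m + 1 => (m + 2) * eulerian n (m + 1) + (n - m) * eulerian n m

/-- Second-order Eulerian numbers. -/
def eulerian2 : ℕ → ℕ → ℕ
  | 0, 0 => 1
  | 0, _ + 1 => 0
  | n + 1, 0 => eulerian2 n 0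
  | n + 1, m + 1 => (m + 2) * eulerian2 n (m + 1) + (2 * n - m) * eulerian2 n m

/-!
Writing `F p` for the exponential generating function of `n ↦ c(n, p)`, the recurrence
`c(n+1, p+1) = n c(n, p+1) + c(n, p)` is, coefficientwise, the differential equation
`(1 - z) F'_{p+1} = F_p`. Since `c(n, p) ≤ n!`, all these series converge on `|z| < 1` and may be
differentiated termwise. The functions `(-log (1 - z))^p / p!` satisfy the same equations with the
same values at `0`, so the two families agree on the unit ball by induction on `p`.
-/

open Real Metric

open scoped Nat

lemma stirling1_le_factorial : ∀ n k, stirling1 n k ≤ n !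
  | 0, 0 => le_rfl
  | 0, _ + 1 => Nat.zero_le _
  | _ + 1, 0 => Nat.zero_le _
  | n + 1, k + 1 => by
    calc stirling1 (n + 1) (k + 1) = n * stirling1 n (k + 1) + stirling1 n k := rfl
      _ ≤ n * n ! + n ! := by
        gcongr
        exacts [stirling1_le_factorial n (k + 1), stirling1_le_factorial n k]
      _ = (n + 1)! := by rw [Nat.factorial_succ]; ring

lemma abs_stirling1_div_factorial_le_one (n k : ℕ) : |(stirling1 n k : ℝ) / n !| ≤ 1 := by
  rw [abs_of_nonneg (by positivity), div_le_one (by positivity)]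
  exact_mod_cast stirling1_le_factorial n k

lemma succ_mul_stirling1_succ_div_factorial (n k : ℕ) :
    ((n + 1 : ℕ) : ℝ) * (stirling1 (n + 1) (k + 1) / (n + 1)!) =
      n * (stirling1 n (k + 1) / n !) + stirling1 n k / n ! := by
  rw [Nat.factorial_succ, stirling1]
  push_cast
  field_simp

section PowerSeries

variable {a b : ℕ → ℝ} {C : ℝ}

lemma summable_mul_pow_of_abs_le (ha : ∀ n, |a n| ≤ C) {z : ℝ} (hz : |z| < 1) :
    Summable fun n => a n * z ^ n := by
  refine .of_norm_bounded ((summable_geometric_of_abs_lt_one hz).abs.mul_left C) fun n => ?_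
  rw [norm_mul, norm_pow, Real.norm_eq_abs, Real.norm_eq_abs, abs_pow]
  gcongr
  exact ha n

lemma summable_natCast_mul_pow_sub_one {r : ℝ} (hr : |r| < 1) :
    Summable fun n : ℕ => (n : ℝ) * r ^ (n - 1) := by
  rw [← summable_nat_add_iff 1]
  have hr' : ‖r‖ < 1 := by rwa [Real.norm_eq_abs]
  simpa [add_mul] using
    (summable_pow_mul_geometric_of_norm_lt_one 1 hr').add (summable_geometric_of_abs_lt_one hr)

lemma norm_natCast_mul_mul_pow_sub_one_le (ha : ∀ n, |a n| ≤ C) (n : ℕ) {y r : ℝ}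
    (hy : |y| ≤ r) : ‖n * a n * y ^ (n - 1)‖ ≤ C * (n * r ^ (n - 1)) := by
  have hC : 0 ≤ C := (abs_nonneg _).trans (ha 0)
  rw [norm_mul, norm_mul, norm_pow, Real.norm_natCast, Real.norm_eq_abs, Real.norm_eq_abs]
  calc n * |a n| * |y| ^ (n - 1) ≤ n * C * r ^ (n - 1) := by gcongr; exact ha n
    _ = C * (n * r ^ (n - 1)) := by ring

lemma summable_natCast_mul_mul_pow_sub_one (ha : ∀ n, |a n| ≤ C) {z : ℝ} (hz : |z| < 1) :
    Summable fun n : ℕ => n * a n * z ^ (n - 1) :=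
  .of_norm_bounded ((summable_natCast_mul_pow_sub_one (r := |z|) (by rwa [abs_abs])).mul_left C)
    fun n => norm_natCast_mul_mul_pow_sub_one_le ha n le_rfl

lemma hasDerivAt_tsum_mul_pow (ha : ∀ n, |a n| ≤ C) {z : ℝ} (hz : |z| < 1) :
    HasDerivAt (fun w => ∑' n, a n * w ^ n) (∑' n : ℕ, n * a n * z ^ (n - 1)) z := by
  obtain ⟨r, hzr, hr⟩ := exists_between hz
  have hr' : |r| < 1 := by rwa [abs_of_nonneg ((abs_nonneg z).trans hzr.le)]
  have hz' : z ∈ ball 0 r := by rwa [mem_ball_zero_iff, Real.norm_eq_abs]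
  refine hasDerivAt_tsum_of_isPreconnected (g := fun n w => a n * w ^ n)
    (g' := fun n w => n * a n * w ^ (n - 1))
    ((summable_natCast_mul_pow_sub_one hr').mul_left C)
    isOpen_ball (convex_ball 0 r).isPreconnected (fun n y _ => ?_) (fun n y hy => ?_)
    (mem_ball_self (pos_of_mem_ball hz')) (summable_mul_pow_of_abs_le ha (by simp)) hz'
  · simpa [mul_comm, mul_assoc, mul_left_comm] using (hasDerivAt_pow n y).const_mul (a n)
  · rw [mem_ball_zero_iff, Real.norm_eq_abs] at hy
    exact norm_natCast_mul_mul_pow_sub_one_le ha n hy.le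

lemma hasSum_mul_pow_of_succ_mul_eq (ha : ∀ n, |a n| ≤ C)
    (hab : ∀ n : ℕ, ((n + 1 : ℕ) : ℝ) * a (n + 1) = n * a n + b n) {z : ℝ} (hz : |z| < 1) :
    HasSum (fun n => b n * z ^ n) ((1 - z) * ∑' n : ℕ, n * a n * z ^ (n - 1)) := by
  set D := ∑' n : ℕ, n * a n * z ^ (n - 1)
  have hD : HasSum (fun n : ℕ => n * a n * z ^ (n - 1)) D :=
    (summable_natCast_mul_mul_pow_sub_one ha hz).hasSum
  have hshift : HasSum (fun n : ℕ => ((n + 1 : ℕ) : ℝ) * a (n + 1) * z ^ n) D := by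
    simpa using (hasSum_nat_add_iff' 1).mpr hD
  have hzD : HasSum (fun n : ℕ => n * a n * z ^ n) (z * D) := by
    refine (hD.mul_left z).congr_fun fun n => ?_
    cases n with
    | zero => simp
    | succ n => simp only [Nat.add_sub_cancel, pow_succ]; ring
  rw [show (1 - z) * D = D - z * D by ring]
  exact (hshift.sub hzD).congr_fun fun n => by rw [← sub_mul, hab n]; ring

end PowerSeries

noncomputable def stirling1EGF (p : ℕ) (z : ℝ) : ℝ :=
  ∑' n, (stirling1 n p : ℝ) / n ! * z ^ n

lemma summable_stirling1EGF (p : ℕ) {z : ℝ} (hz : |z| < 1) :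
    Summable fun n => (stirling1 n p : ℝ) / n ! * z ^ n :=
  summable_mul_pow_of_abs_le (fun n => abs_stirling1_div_factorial_le_one n p) hz

lemma stirling1EGF_zero_left (z : ℝ) : stirling1EGF 0 z = 1 := by
  rw [stirling1EGF, tsum_eq_single 0 fun n hn => ?_]
  · simp [stirling1]
  · obtain ⟨m, rfl⟩ := Nat.exists_eq_succ_of_ne_zero hn
    simp [stirling1]

lemma stirling1EGF_succ_zero (p : ℕ) : stirling1EGF (p + 1) 0 = 0 := by
  rw [stirling1EGF, tsum_eq_single 0 fun n hn => by simp [hn]]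
  simp [stirling1]

lemma hasDerivAt_stirling1EGF_succ (p : ℕ) {z : ℝ} (hz : |z| < 1) :
    HasDerivAt (stirling1EGF (p + 1)) (stirling1EGF p z / (1 - z)) z := by
  have ha := fun n => abs_stirling1_div_factorial_le_one n (p + 1)
  have hode := hasSum_mul_pow_of_succ_mul_eq ha
    (fun n => succ_mul_stirling1_succ_div_factorial n p) hz
  have h1z : 1 - z ≠ 0 := by linarith [le_abs_self z]
  rw [stirling1EGF, hode.tsum_eq, mul_div_cancel_left₀ _ h1z]
  exact hasDerivAt_tsum_mul_pow ha hz

lemma hasDerivAt_neg_log_one_sub_pow_div_factorial (p : ℕ) {z : ℝ} (hz : z < 1) :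
    HasDerivAt (fun w => (-log (1 - w)) ^ (p + 1) / (p + 1)!)
      ((-log (1 - z)) ^ p / p ! / (1 - z)) z := by
  have hlog : HasDerivAt (fun w => -log (1 - w)) (1 - z)⁻¹ z := by
    simpa [neg_div] using (((hasDerivAt_id z).const_sub 1).log (sub_pos.2 hz).ne').fun_neg
  refine ((hlog.pow (p + 1)).div_const ((p + 1)! : ℝ)).congr_deriv ?_
  rw [Nat.factorial_succ, Nat.add_sub_cancel]
  push_cast
  field_simp

lemma stirling1EGF_eq (p : ℕ) {z : ℝ} (hz : |z| < 1) :
    stirling1EGF p z = (-log (1 - z)) ^ p / p ! := by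
  induction p generalizing z with
  | zero => simp [stirling1EGF_zero_left]
  | succ p ih =>
    have hball {w : ℝ} : w ∈ ball (0 : ℝ) 1 ↔ |w| < 1 := by
      rw [mem_ball_zero_iff, Real.norm_eq_abs]
    have hF {w} (hw : w ∈ ball (0 : ℝ) 1) := hasDerivAt_stirling1EGF_succ p (hball.1 hw)
    have hG {w} (hw : w ∈ ball (0 : ℝ) 1) :=
      hasDerivAt_neg_log_one_sub_pow_div_factorial p (abs_lt.1 (hball.1 hw)).2
    refine isOpen_ball.eqOn_of_deriv_eq (convex_ball 0 1).isPreconnected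
      (fun w hw => (hF hw).differentiableAt.differentiableWithinAt)
      (fun w hw => (hG hw).differentiableAt.differentiableWithinAt)
      (fun w hw => ?_) (mem_ball_self one_pos) ?_ (hball.2 hz)
    · rw [(hF hw).deriv, (hG hw).deriv, ih (hball.1 hw)]
    · simp [stirling1EGF_succ_zero]

theorem egf_stirling1 (p : ℕ) (z : ℝ) (hz : |z| < 1) :
    HasSum (fun n : ℕ => (stirling1 n p : ℝ) * z ^ n / (n.factorial : ℝ))
      ((-Real.log (1 - z)) ^ p / (p.factorial : ℝ)) := by
  rw [← stirling1EGF_eq p hz, stirling1EGF]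
  exact (summable_stirling1EGF p hz).hasSum.congr_fun fun n => by ring
end

section
/- Let a : ℕ → ℝ and R > 0 be such that the power series F(w) := ∑_{n=0}^∞ a_n w^n converges for all real w with |w| < R. Then for every natural number k and every real z with |z| < R, ∑_{n=0}^∞ n^k · a_n · z^n = ∑_{j=0}^{k} S(k,j) · z^j · F^{(j)}(z), where F^{(j)} denotes the j-th derivative of F. -/
/-! Expanding `n ^ k = ∑ⱼ S(k, j) n^{(j)}` in falling factorials `n^{(j)} = n (n - 1) ⋯ (n - j + 1)`
(the recurrence of `S(k, j)` is that of `n · n^{(j)} = n^{(j + 1)} + j n^{(j)}`) splits the series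
into `k + 1` series, the `j`-th being `z ^ j` times `∑ n^{(j)} aₙ z ^ (n - j)`, the termwise `j`-th
derivative of `F`. Termwise differentiation is legitimate in the disc `‖x‖ < R`: on a smaller disc
`‖x‖ < r` the derivative series is dominated by `∑ n^{(j)} ‖aₙ‖ r ^ (n - j)`, which converges because
`‖aₙ‖ ρ ^ n` is bounded for `r < ρ < R`. -/

theorem stirling2_eq_zero_of_lt : ∀ {n k : ℕ}, n < k → stirling2 n k = 0
  | 0, _ + 1, _ => rfl
  | n + 1, k + 1, h => by
    simp only [stirling2, stirling2_eq_zero_of_lt (by omega : n < k + 1),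
      stirling2_eq_zero_of_lt (by omega : n < k), mul_zero]

theorem Nat.descFactorial_mul_self (n j : ℕ) :
    n.descFactorial j * n = n.descFactorial (j + 1) + j * n.descFactorial j := by
  rcases le_or_gt j n with h | h
  · rw [Nat.descFactorial_succ, ← Nat.add_mul, Nat.sub_add_cancel h, Nat.mul_comm]
  · simp [Nat.descFactorial_of_lt h]

theorem pow_eq_sum_stirling2_mul_descFactorial (n k : ℕ) :
    n ^ k = ∑ j ∈ Finset.range (k + 1), stirling2 k j * n.descFactorial j := by
  induction k with
  | zero => simp [stirling2]
  | succ k ih =>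
    -- reindexing `j ↦ j + 1`: the `j = 0` term vanishes on one side, `j = k + 1` on the other
    have shift : ∑ j ∈ Finset.range (k + 1), stirling2 k j * (j * n.descFactorial j) =
        ∑ j ∈ Finset.range (k + 1), (j + 1) * stirling2 k (j + 1) * n.descFactorial (j + 1) := by
      rw [Finset.sum_range_succ', Finset.sum_range_succ _ k, stirling2_eq_zero_of_lt k.lt_succ_self]
      simp only [zero_mul, mul_zero, add_zero]
      exact Finset.sum_congr rfl fun j _ => by ring
    calc n ^ (k + 1)
        = ∑ j ∈ Finset.range (k + 1), stirling2 k j * (n.descFactorial j * n) := by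
          rw [pow_succ, ih, Finset.sum_mul]
          exact Finset.sum_congr rfl fun j _ => Nat.mul_assoc _ _ _
      _ = ∑ j ∈ Finset.range (k + 1),
            ((j + 1) * stirling2 k (j + 1) + stirling2 k j) * n.descFactorial (j + 1) := by
          simp only [Nat.descFactorial_mul_self, Nat.mul_add, Finset.sum_add_distrib, shift]
          rw [← Finset.sum_add_distrib]
          exact Finset.sum_congr rfl fun j _ => by ring
      _ = ∑ j ∈ Finset.range (k + 2), stirling2 (k + 1) j * n.descFactorial j := by
          rw [Finset.sum_range_succ' _ (k + 1)]
          simp [stirling2]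

theorem pow_mul_descFactorial_mul_pow_sub {R : Type*} [CommSemiring R] (z : R) (n j : ℕ) :
    z ^ j * (n.descFactorial j * z ^ (n - j)) = n.descFactorial j * z ^ n := by
  rcases le_or_gt j n with h | h
  · rw [mul_left_comm, ← pow_add, Nat.add_sub_cancel' h]
  · simp [Nat.descFactorial_of_lt h]

theorem summable_pow_mul_norm_mul_pow {𝕜 : Type*} [NormedDivisionRing 𝕜] {a : ℕ → 𝕜} {w : 𝕜}
    (ha : Summable fun n => a n * w ^ n) {r : ℝ} (hr0 : 0 ≤ r) (hr : r < ‖w‖) (m : ℕ) :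
    Summable fun n : ℕ => (n : ℝ) ^ m * ‖a n‖ * r ^ n := by
  obtain ⟨C, hC⟩ := ha.tendsto_atTop_zero.norm.bddAbove_range
  have hw : 0 < ‖w‖ := hr0.trans_lt hr
  have hq : ‖r / ‖w‖‖ < 1 := by
    rwa [Real.norm_eq_abs, abs_of_nonneg (by positivity), div_lt_one hw]
  refine .of_nonneg_of_le (fun n => by positivity) (fun n => ?_)
    ((summable_pow_mul_geometric_of_norm_lt_one m hq).mul_left C)
  have hCn : ‖a n‖ * ‖w‖ ^ n ≤ C := by
    simpa only [norm_mul, norm_pow] using hC (Set.mem_range_self n)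
  have hpow : ‖w‖ ^ n * (r / ‖w‖) ^ n = r ^ n := by rw [← mul_pow, mul_div_cancel₀ _ hw.ne']
  calc (n : ℝ) ^ m * ‖a n‖ * r ^ n = (‖a n‖ * ‖w‖ ^ n) * ((n : ℝ) ^ m * (r / ‖w‖) ^ n) := by
        rw [← hpow]; ring
    _ ≤ C * ((n : ℝ) ^ m * (r / ‖w‖) ^ n) := by gcongr

section PowerSeries

variable {𝕜 : Type*} [RCLike 𝕜] {a : ℕ → 𝕜} {R : ℝ}

theorem summable_descFactorial_mul_norm_mul_pow_sub
    (hconv : ∀ w : 𝕜, ‖w‖ < R → Summable fun n => a n * w ^ n) {r : ℝ} (hr0 : 0 < r)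
    (hr : r < R) (m : ℕ) :
    Summable fun n : ℕ => (n.descFactorial m : ℝ) * ‖a n‖ * r ^ (n - m) := by
  obtain ⟨ρ, hrρ, hρR⟩ := exists_between hr
  have hρ : ‖(ρ : 𝕜)‖ = ρ := by rw [RCLike.norm_ofReal, abs_of_pos (hr0.trans hrρ)]
  have hsum := summable_pow_mul_norm_mul_pow (hconv ρ (hρ.symm ▸ hρR)) hr0.le (hρ.symm ▸ hrρ) m
  refine .of_nonneg_of_le (fun n => by positivity) (fun n => ?_) (hsum.div_const (r ^ m))
  rcases le_or_gt m n with h | h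
  · rw [le_div_iff₀ (by positivity)]
    calc (n.descFactorial m : ℝ) * ‖a n‖ * r ^ (n - m) * r ^ m
        = (n.descFactorial m : ℝ) * ‖a n‖ * r ^ n := by
          rw [mul_assoc _ (r ^ _), ← pow_add, Nat.sub_add_cancel h]
      _ ≤ (n : ℝ) ^ m * ‖a n‖ * r ^ n := by gcongr; exact_mod_cast n.descFactorial_le_pow m
  · rw [Nat.descFactorial_of_lt h, Nat.cast_zero, zero_mul, zero_mul]
    positivity

theorem norm_mul_descFactorial_mul_pow_sub_le {x : 𝕜} {r : ℝ} (hx : ‖x‖ ≤ r) (n m : ℕ) :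
    ‖a n * (n.descFactorial m * x ^ (n - m))‖ ≤ (n.descFactorial m : ℝ) * ‖a n‖ * r ^ (n - m) := by
  rw [norm_mul, norm_mul, norm_pow, RCLike.norm_natCast, mul_left_comm, ← mul_assoc]
  gcongr

theorem summable_mul_descFactorial_mul_pow_sub
    (hconv : ∀ w : 𝕜, ‖w‖ < R → Summable fun n => a n * w ^ n) (m : ℕ) {y : 𝕜} (hy : ‖y‖ < R) :
    Summable fun n : ℕ => a n * (n.descFactorial m * y ^ (n - m)) := by
  obtain ⟨r, hyr, hrR⟩ := exists_between hy
  exact .of_norm_bounded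
    (summable_descFactorial_mul_norm_mul_pow_sub hconv ((norm_nonneg y).trans_lt hyr) hrR m)
    (fun n => norm_mul_descFactorial_mul_pow_sub_le hyr.le n m)

theorem hasDerivAt_descFactorial_mul_pow_sub (n j : ℕ) (x : 𝕜) :
    HasDerivAt (fun x : 𝕜 => (n.descFactorial j : 𝕜) * x ^ (n - j))
      (n.descFactorial (j + 1) * x ^ (n - (j + 1))) x := by
  refine ((hasDerivAt_pow (n - j) x).const_mul (n.descFactorial j : 𝕜)).congr_deriv ?_
  rw [Nat.descFactorial_succ, Nat.sub_sub, Nat.cast_mul]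
  ring

theorem hasDerivAt_tsum_mul_descFactorial_mul_pow_sub
    (hconv : ∀ w : 𝕜, ‖w‖ < R → Summable fun n => a n * w ^ n) (j : ℕ) {y : 𝕜} (hy : ‖y‖ < R) :
    HasDerivAt (fun x => ∑' n : ℕ, a n * (n.descFactorial j * x ^ (n - j)))
      (∑' n : ℕ, a n * (n.descFactorial (j + 1) * y ^ (n - (j + 1)))) y := by
  obtain ⟨r, hyr, hrR⟩ := exists_between hy
  have hy_mem : y ∈ Metric.ball (0 : 𝕜) r := mem_ball_zero_iff.2 hyr
  exact hasDerivAt_tsum_of_isPreconnected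
    (summable_descFactorial_mul_norm_mul_pow_sub hconv ((norm_nonneg y).trans_lt hyr) hrR (j + 1))
    Metric.isOpen_ball (convex_ball 0 r).isPreconnected
    (fun n x _ => (hasDerivAt_descFactorial_mul_pow_sub n j x).const_mul (a n))
    (fun n x hx => norm_mul_descFactorial_mul_pow_sub_le (mem_ball_zero_iff.1 hx).le n (j + 1))
    hy_mem (summable_mul_descFactorial_mul_pow_sub hconv j hy) hy_mem

theorem hasSum_mul_descFactorial_mul_pow_sub_iteratedDeriv {F : 𝕜 → 𝕜}
    (hconv : ∀ w : 𝕜, ‖w‖ < R → Summable fun n => a n * w ^ n)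
    (hF : ∀ w : 𝕜, ‖w‖ < R → F w = ∑' n : ℕ, a n * w ^ n) (j : ℕ) {y : 𝕜} (hy : ‖y‖ < R) :
    HasSum (fun n : ℕ => a n * (n.descFactorial j * y ^ (n - j))) (iteratedDeriv j F y) := by
  induction j generalizing y with
  | zero => simpa [hF y hy] using (hconv y hy).hasSum
  | succ j ih =>
    have hF_eq : (fun x => ∑' n : ℕ, a n * (n.descFactorial j * x ^ (n - j))) =ᶠ[nhds y]
        iteratedDeriv j F :=
      Filter.eventuallyEq_of_mem (Metric.isOpen_ball.mem_nhds (mem_ball_zero_iff.2 hy))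
        fun x hx => (ih (mem_ball_zero_iff.1 hx)).tsum_eq
    rw [iteratedDeriv_succ,
      ((hasDerivAt_tsum_mul_descFactorial_mul_pow_sub hconv j hy).congr_of_eventuallyEq
        hF_eq.symm).deriv]
    exact (summable_mul_descFactorial_mul_pow_sub hconv (j + 1) hy).hasSum

end PowerSeries

theorem polynomial_power_weighted_series_general (a : ℕ → ℝ) (R : ℝ)
    (hconv : ∀ w : ℝ, |w| < R → Summable (fun n : ℕ => a n * w ^ n))
    (F : ℝ → ℝ) (hF : ∀ w : ℝ, F w = ∑' n : ℕ, a n * w ^ n)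
    (k : ℕ) (z : ℝ) (hz : |z| < R) :
    HasSum (fun n : ℕ => (n : ℝ) ^ k * a n * z ^ n)
      (∑ j ∈ Finset.range (k + 1),
        (stirling2 k j : ℝ) * z ^ j * iteratedDeriv j F z) := by
  have hderiv (j : ℕ) :
      HasSum (fun n : ℕ => a n * (n.descFactorial j * z ^ (n - j))) (iteratedDeriv j F z) :=
    hasSum_mul_descFactorial_mul_pow_sub_iteratedDeriv hconv (fun w _ => hF w) j hz
  have hsplit : (fun n : ℕ => (n : ℝ) ^ k * a n * z ^ n) = fun n : ℕ =>
      ∑ j ∈ Finset.range (k + 1),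
        (stirling2 k j : ℝ) * z ^ j * (a n * (n.descFactorial j * z ^ (n - j))) := by
    funext n
    rw [← Nat.cast_pow, pow_eq_sum_stirling2_mul_descFactorial, Nat.cast_sum, Finset.sum_mul,
      Finset.sum_mul]
    refine Finset.sum_congr rfl fun j _ => ?_
    rw [mul_assoc _ (z ^ j), mul_left_comm (z ^ j), pow_mul_descFactorial_mul_pow_sub, Nat.cast_mul]
    ring
  rw [hsplit]
  exact hasSum_sum fun j _ => (hderiv j).mul_left ((stirling2 k j : ℝ) * z ^ j)

theorem polynomial_power_weighted_series (a : ℕ → ℝ) (R : ℝ) (hR : 0 < R)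
    (hconv : ∀ w : ℝ, |w| < R → Summable (fun n : ℕ => a n * w ^ n))
    (F : ℝ → ℝ) (hF : ∀ w : ℝ, F w = ∑' n : ℕ, a n * w ^ n)
    (k : ℕ) (z : ℝ) (hz : |z| < R) :
    HasSum (fun n : ℕ => (n : ℝ) ^ k * a n * z ^ n)
      (∑ j ∈ Finset.range (k + 1),
        (stirling2 k j : ℝ) * z ^ j * iteratedDeriv j F z) :=
  polynomial_power_weighted_series_general a R hconv F hF k z hz
end

section
/- For all natural numbers j, p and every real z with z < 1, the j-th derivative of the function x ↦ (-1)^p (log(1-x))^p / p! at z equals ∑_{i=0}^{min(j,p)} c(j,i) · ((-1)^{p-i}/(p-i)!) · (log(1-z))^{p-i} / (1-z)^j. -/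
/-!
Write `L = -log (1 - x)`, so that `L' = 1 / (1 - x)` and the `m`-th function `L ^ m / m!` differentiates
to `(L ^ (m - 1) / (m - 1)!) / (1 - x)`. Hence the `j`-th derivative of `L ^ p / p!` has the form
`Q_j(L) / (1 - x) ^ j` with `Q_0 = L ^ p / p!` and `Q_{j+1} = Q_j' + j Q_j`, derivative taken in `L`.
Expanding `Q_j = ∑ c(j, i) L ^ (p - i) / (p - i)!`, this is exactly the recurrence
`c(j + 1, i) = j c(j, i) + c(j, i - 1)`.
-/

open Finset Nat

theorem stirling1_eq_zero_of_lt {n k : ℕ} (h : n < k) : stirling1 n k = 0 := by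
  induction n generalizing k with
  | zero => obtain ⟨k, rfl⟩ := Nat.exists_eq_succ_of_ne_zero (by omega : k ≠ 0); rfl
  | succ n ih =>
    obtain ⟨k, rfl⟩ := Nat.exists_eq_succ_of_ne_zero (by omega : k ≠ 0)
    simp [stirling1, ih (by omega : n < k), ih (by omega : n < k + 1)]

theorem sum_range_stirling1_succ_mul {R : Type*} [CommSemiring R] (a : ℕ → R) (n j : ℕ) :
    ∑ i ∈ range (n + 1), (stirling1 (j + 1) i : R) * a i =
      j * ∑ i ∈ range (n + 1), (stirling1 j i : R) * a i +
        ∑ i ∈ range n, (stirling1 j i : R) * a (i + 1) := by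
  have hzero : (stirling1 (j + 1) 0 : R) = j * stirling1 j 0 := by cases j <;> simp [stirling1]
  rw [sum_range_succ', sum_range_succ' (fun i => (stirling1 j i : R) * a i), hzero]
  simp only [stirling1, Nat.cast_add, Nat.cast_mul, add_mul, mul_assoc, sum_add_distrib, mul_add,
    mul_sum]
  ring

theorem iteratedDeriv_eqOn_of_hasDerivAt {𝕜 E : Type*} [NontriviallyNormedField 𝕜]
    [NormedAddCommGroup E] [NormedSpace 𝕜 E] {s : Set 𝕜} (hs : IsOpen s) {F : 𝕜 → E}
    {f : ℕ → 𝕜 → E} (h0 : Set.EqOn F (f 0) s)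
    (hf : ∀ j, ∀ x ∈ s, HasDerivAt (f j) (f (j + 1) x) x) (j : ℕ) :
    Set.EqOn (iteratedDeriv j F) (f j) s := by
  induction j with
  | zero => simpa using h0
  | succ j ih =>
    intro x hx
    rw [iteratedDeriv_succ, (ih.eventuallyEq_of_mem (hs.mem_nhds hx)).deriv_eq]
    exact (hf j x hx).deriv

theorem HasDerivAt.div_one_sub_pow {f : ℝ → ℝ} {f' x : ℝ} (hf : HasDerivAt f f' x) (hx : x ≠ 1)
    (j : ℕ) :
    HasDerivAt (fun y => f y / (1 - y) ^ j) ((f' * (1 - x) + j * f x) / (1 - x) ^ (j + 1)) x := by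
  have hx' : 1 - x ≠ 0 := sub_ne_zero.mpr hx.symm
  have h := hf.div (((hasDerivAt_id x).const_sub 1).pow j) (pow_ne_zero j hx')
  refine h.congr_deriv ?_
  cases j with
  | zero => field_simp; simp
  | succ j => simp only [id, Pi.pow_apply, Nat.add_sub_cancel]; field_simp; ring

/-- `L ^ m / m!` in the notation above. -/
noncomputable def logPowDiv (m : ℕ) (x : ℝ) : ℝ := (-1) ^ m * Real.log (1 - x) ^ m / m !

theorem logPowDiv_zero : logPowDiv 0 = fun _ => 1 := by
  ext; simp [logPowDiv]

theorem hasDerivAt_logPowDiv_succ (m : ℕ) {x : ℝ} (hx : x ≠ 1) :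
    HasDerivAt (logPowDiv (m + 1)) (logPowDiv m x / (1 - x)) x := by
  have hx' : 1 - x ≠ 0 := sub_ne_zero.mpr hx.symm
  have hlog := ((hasDerivAt_id x).const_sub 1).log hx'
  have h := ((hlog.pow (m + 1)).const_mul ((-1 : ℝ) ^ (m + 1))).div_const ((m + 1)! : ℝ)
  refine h.congr_deriv ?_
  simp only [logPowDiv, id, Nat.add_sub_cancel, Nat.factorial_succ, Nat.cast_mul]
  field_simp
  ring

/-- `Q_j(L)` in the notation above. -/
noncomputable def stirlingLogSum (p j : ℕ) (x : ℝ) : ℝ :=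
  ∑ i ∈ range (p + 1), (stirling1 j i : ℝ) * logPowDiv (p - i) x

theorem stirlingLogSum_zero (p : ℕ) : stirlingLogSum p 0 = logPowDiv p := by
  ext x
  simp [stirlingLogSum, sum_range_succ', stirling1]

theorem hasDerivAt_stirlingLogSum (p j : ℕ) {x : ℝ} (hx : x ≠ 1) :
    HasDerivAt (stirlingLogSum p j)
      ((∑ i ∈ range p, (stirling1 j i : ℝ) * logPowDiv (p - (i + 1)) x) / (1 - x)) x := by
  have h_low : ∀ i ∈ range p, HasDerivAt (fun y => (stirling1 j i : ℝ) * logPowDiv (p - i) y)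
      (stirling1 j i * (logPowDiv (p - (i + 1)) x / (1 - x))) x := by
    intro i hi
    rw [show p - i = p - (i + 1) + 1 by have := mem_range.mp hi; omega]
    exact (hasDerivAt_logPowDiv_succ _ hx).const_mul _
  have h_top : HasDerivAt (fun y => (stirling1 j p : ℝ) * logPowDiv (p - p) y) 0 x := by
    simpa [logPowDiv_zero] using hasDerivAt_const x (stirling1 j p : ℝ)
  rw [show stirlingLogSum p j = fun y => _ from funext fun y => sum_range_succ _ p]
  refine ((HasDerivAt.fun_sum h_low).fun_add h_top).congr_deriv ?_
  rw [add_zero, sum_div]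
  simp only [mul_div_assoc]

theorem hasDerivAt_stirlingLogSum_div (p j : ℕ) {x : ℝ} (hx : x ≠ 1) :
    HasDerivAt (fun y => stirlingLogSum p j y / (1 - y) ^ j)
      (stirlingLogSum p (j + 1) x / (1 - x) ^ (j + 1)) x := by
  refine ((hasDerivAt_stirlingLogSum p j hx).div_one_sub_pow hx j).congr_deriv ?_
  have hx' : 1 - x ≠ 0 := sub_ne_zero.mpr hx.symm
  rw [stirlingLogSum, stirlingLogSum, sum_range_stirling1_succ_mul (fun i => logPowDiv (p - i) x)]
  field_simp
  ring

theorem iteratedDeriv_log_pow (j p : ℕ) (z : ℝ) (hz : z < 1) :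
    iteratedDeriv j (fun x : ℝ => (-1 : ℝ) ^ p * Real.log (1 - x) ^ p / (p.factorial : ℝ)) z =
      ∑ i ∈ Finset.range (min j p + 1),
        (stirling1 j i : ℝ) * ((-1 : ℝ) ^ (p - i) / ((p - i).factorial : ℝ)) *
          Real.log (1 - z) ^ (p - i) / (1 - z) ^ j := by
  have hderiv := iteratedDeriv_eqOn_of_hasDerivAt isOpen_Iio
    (f := fun j y => stirlingLogSum p j y / (1 - y) ^ j) (F := logPowDiv p)
    (fun y _ => by simp [stirlingLogSum_zero])
    (fun j y hy => hasDerivAt_stirlingLogSum_div p j (ne_of_lt hy)) j hz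
  calc iteratedDeriv j (logPowDiv p) z
      = ∑ i ∈ range (p + 1), (stirling1 j i : ℝ) * logPowDiv (p - i) z / (1 - z) ^ j := by
        rw [hderiv]; exact sum_div ..
    _ = ∑ i ∈ range (min j p + 1), (stirling1 j i : ℝ) * logPowDiv (p - i) z / (1 - z) ^ j := by
        refine (sum_subset (range_subset_range.2 (by omega)) fun i hi hij => ?_).symm
        rw [stirling1_eq_zero_of_lt (by simp at hi hij; omega)]
        simp
    _ = _ := sum_congr rfl fun i _ => by simp only [logPowDiv]; ring
end

section
/- Let d ≥ 1 be a natural number and let F = ∑_{n≥0} f_n X^n be a formal power series with real coefficients. Then the formal power series ∑_{n≥0} ((n+d)!/n!) · f_n · X^n equals ∑_{i=0}^{d} C(d,i)^2 · (d-i)! · X^i · F^{(i)}, where F^{(i)} denotes the i-th formal derivative of F. -/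
/-! The operator `X^i D^i` multiplies the `n`-th coefficient by the falling factorial `n^(i)`, so
both sides act diagonally on coefficients and the identity reduces to
`(n + d)^(d) = ∑ C(d,i)^2 (d-i)! n^(i)`. Dividing by `d!`, this is Vandermonde's identity
`C(n+d, d) = ∑ C(n,i) C(d,d-i)`. -/

open PowerSeries Finset Nat

theorem Nat.add_choose_eq_sum_range (m n k : ℕ) :
    (m + n).choose k = ∑ i ∈ range (k + 1), m.choose i * n.choose (k - i) := by
  rw [add_choose_eq, Finset.Nat.sum_antidiagonal_eq_sum_range_succ_mk]

theorem Nat.sum_range_choose_sq_mul_factorial_mul_descFactorial (d n : ℕ) :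
    ∑ i ∈ range (d + 1), d.choose i ^ 2 * (d - i)! * n.descFactorial i =
      (n + d).descFactorial d := by
  have hterm : ∀ i ∈ range (d + 1), d.choose i ^ 2 * (d - i)! * n.descFactorial i =
      d ! * (n.choose i * d.choose (d - i)) := by
    intro i hi
    have hid : i ≤ d := Nat.lt_succ_iff.mp (mem_range.mp hi)
    rw [descFactorial_eq_factorial_mul_choose, choose_symm hid,
      ← choose_mul_factorial_mul_factorial hid]
    ring
  rw [sum_congr rfl hterm, ← mul_sum, ← add_choose_eq_sum_range,
    descFactorial_eq_factorial_mul_choose]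

namespace PowerSeries

variable {R : Type*} [CommSemiring R]

theorem coeff_X_pow_mul_iterate_derivative (F : R⟦X⟧) (i n : ℕ) :
    coeff n (X ^ i * (d⁄dX R)^[i] F) = n.descFactorial i * coeff n F := by
  rw [coeff_X_pow_mul']
  split_ifs with hin
  · obtain ⟨m, rfl⟩ := Nat.exists_eq_add_of_le' hin
    rw [Nat.add_sub_cancel, coeff_iterate_derivative, add_descFactorial_eq_ascFactorial]
  · rw [descFactorial_eq_zero_iff_lt.mpr (not_le.mp hin), Nat.cast_zero, zero_mul]

theorem mk_descFactorial_mul_coeff_eq_sum (d : ℕ) (F : R⟦X⟧) :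
    mk (fun n ↦ (n + d).descFactorial d * coeff n F) =
      ∑ i ∈ range (d + 1), C ((d.choose i ^ 2 * (d - i)! : ℕ) : R) * X ^ i * (d⁄dX R)^[i] F := by
  ext n
  simp only [coeff_mk, map_sum, mul_assoc, coeff_C_mul, coeff_X_pow_mul_iterate_derivative]
  rw [← sum_range_choose_sq_mul_factorial_mul_descFactorial, Nat.cast_sum, sum_mul]
  refine sum_congr rfl fun i _ ↦ ?_
  push_cast
  ring

end PowerSeries

theorem Nat.cast_factorial_add_div_factorial {K : Type*} [DivisionSemiring K] [CharZero K]
    (n d : ℕ) : ((n + d)! / n ! : K) = (n + d).descFactorial d := by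
  have h := factorial_mul_descFactorial (Nat.le_add_left d n)
  rw [Nat.add_sub_cancel] at h
  rw [div_eq_iff (Nat.cast_ne_zero.mpr n.factorial_ne_zero), ← Nat.cast_mul, mul_comm, h]

open PowerSeries in
theorem powerSeries_deriv_identity_general (d : ℕ) (F : PowerSeries ℝ) :
    PowerSeries.mk (fun n : ℕ =>
        (((n + d).factorial : ℝ) / (n.factorial : ℝ)) * PowerSeries.coeff (R := ℝ) n F) =
      ∑ i ∈ Finset.range (d + 1),
        PowerSeries.C (R := ℝ) ((d.choose i : ℝ) ^ 2 * ((d - i).factorial : ℝ)) *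
          PowerSeries.X ^ i * (⇑(PowerSeries.derivative ℝ))^[i] F := by
  simp only [Nat.cast_factorial_add_div_factorial]
  exact_mod_cast mk_descFactorial_mul_coeff_eq_sum d F

open PowerSeries in
theorem powerSeries_deriv_identity (d : ℕ) (hd : 1 ≤ d) (F : PowerSeries ℝ) :
    PowerSeries.mk (fun n : ℕ =>
        (((n + d).factorial : ℝ) / (n.factorial : ℝ)) * PowerSeries.coeff (R := ℝ) n F) =
      ∑ i ∈ Finset.range (d + 1),
        PowerSeries.C (R := ℝ) ((d.choose i : ℝ) ^ 2 * ((d - i).factorial : ℝ)) *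
          PowerSeries.X ^ i * (⇑(PowerSeries.derivative ℝ))^[i] F :=
  powerSeries_deriv_identity_general d F
end

section
/- For every natural number p ≥ 1 and every real z with |z| < 1, ∑_{n=0}^∞ n^p · z^n = (1/(1-z)^{p+1}) · ∑_{i=0}^{p-1} A(p,i) · z^{i+1}. -/
open Finset

theorem eulerian_zero_right : ∀ n, eulerian n 0 = 1
  | 0 => rfl
  | n + 1 => by rw [eulerian, eulerian_zero_right n]

theorem eulerian_eq_zero_of_lt : ∀ {n m : ℕ}, n < m → eulerian n m = 0
  | 0, _ + 1, _ => rfl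
  | n + 1, m + 1, h => by
    rw [eulerian, eulerian_eq_zero_of_lt (by omega : n < m + 1),
      eulerian_eq_zero_of_lt (by omega : n < m), mul_zero, mul_zero, add_zero]

theorem eulerian_succ_self (n : ℕ) : eulerian (n + 1) (n + 1) = 0 := by
  rw [eulerian, eulerian_eq_zero_of_lt n.lt_succ_self, Nat.sub_self]; simp

theorem mul_add_choose_eq (x k i : ℕ) :
    x * (x + k).choose (i + k + 1) =
      (k + 1) * (x + k).choose (i + k + 2) + (i + 1) * (x + k + 1).choose (i + k + 2) := by
  have absorb := Nat.choose_succ_right_eq (x + k) (i + k + 1)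
  rw [Nat.choose_succ_succ']
  rcases Nat.lt_or_ge (x + k) (i + k + 1) with hlt | hge
  · simp [Nat.choose_eq_zero_of_lt hlt, Nat.choose_eq_zero_of_lt (by omega : x + k < i + k + 2)]
  · obtain ⟨y, rfl⟩ : ∃ y, x = y + i + 1 := ⟨x - i - 1, by omega⟩
    rw [show y + i + 1 + k - (i + k + 1) = y by omega] at absorb
    nlinarith [absorb]

theorem worpitzky (q x : ℕ) :
    x ^ (q + 1) = ∑ ik ∈ antidiagonal q, eulerian (q + 1) ik.1 * (x + ik.2).choose (q + 1) := by
  induction q with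
  | zero => simp [eulerian]
  | succ q ih =>
    let f : ℕ × ℕ → ℕ := fun jl => (jl.1 + 1) * eulerian (q + 1) jl.1 * (x + jl.2).choose (q + 2)
    have reindex : ∑ ik ∈ antidiagonal q, f (ik.1, ik.2 + 1) =
        f (0, q + 1) + ∑ ik ∈ antidiagonal q, f (ik.1 + 1, ik.2) := by
      rw [← Nat.sum_antidiagonal_succ, Nat.sum_antidiagonal_succ']
      simp [f, eulerian_succ_self]
    have recurrence : ∀ ik ∈ antidiagonal q,
        eulerian (q + 2) (ik.1 + 1) * (x + ik.2).choose (q + 2) =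
          f (ik.1 + 1, ik.2) + (ik.2 + 1) * eulerian (q + 1) ik.1 * (x + ik.2).choose (q + 2) := by
      rintro ⟨i, k⟩ hik
      obtain rfl : i + k = q := mem_antidiagonal.1 hik
      rw [eulerian, show i + k + 1 - i = k + 1 by omega]
      ring
    calc x ^ (q + 2)
        = ∑ ik ∈ antidiagonal q, eulerian (q + 1) ik.1 * (x * (x + ik.2).choose (q + 1)) := by
          rw [pow_succ', ih, mul_sum]; exact sum_congr rfl fun _ _ => by ring
      _ = ∑ ik ∈ antidiagonal q, f (ik.1, ik.2 + 1) +
          ∑ ik ∈ antidiagonal q, (ik.2 + 1) * eulerian (q + 1) ik.1 * (x + ik.2).choose (q + 2) := by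
          rw [← sum_add_distrib]
          refine sum_congr rfl fun ⟨i, k⟩ hik => ?_
          obtain rfl : i + k = q := mem_antidiagonal.1 hik
          simp only [f]
          rw [mul_add_choose_eq, ← add_assoc]; ring
      _ = ∑ jl ∈ antidiagonal (q + 1), eulerian (q + 2) jl.1 * (x + jl.2).choose (q + 2) := by
          rw [reindex, Nat.sum_antidiagonal_succ, sum_congr rfl recurrence, sum_add_distrib]
          simp [f, eulerian_zero_right, add_assoc]

theorem hasSum_add_choose_mul_geometric {𝕜 : Type*} [NormedField 𝕜] [HasSummableGeomSeries 𝕜]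
    (k d : ℕ) {z : 𝕜} (hz : ‖z‖ < 1) :
    HasSum (fun n => ((n + k).choose (k + d) : 𝕜) * z ^ n) (z ^ d / (1 - z) ^ (k + d + 1)) := by
  have initial_terms_vanish : ∑ n ∈ range d, ((n + k).choose (k + d) : 𝕜) * z ^ n = 0 :=
    sum_eq_zero fun n hn => by
      rw [Nat.choose_eq_zero_of_lt (by simp at hn; omega), Nat.cast_zero, zero_mul]
  have reindexed : (fun n => ((n + d + k).choose (k + d) : 𝕜) * z ^ (n + d)) =
      fun n => z ^ d * ((n + (k + d)).choose (k + d) * z ^ n) :=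
    funext fun n => by rw [add_right_comm, add_assoc, pow_add]; ring
  rw [← hasSum_nat_add_iff' d, initial_terms_vanish, sub_zero, reindexed, ← mul_one_div]
  exact (hasSum_choose_mul_geometric_of_norm_lt_one (k + d) hz).mul_left (z ^ d)

theorem ogf_poly_powers_eulerian (p : ℕ) (hp : 1 ≤ p) (z : ℝ) (hz : |z| < 1) :
    HasSum (fun n : ℕ => (n : ℝ) ^ p * z ^ n)
      (1 / (1 - z) ^ (p + 1) *
        ∑ i ∈ Finset.range p, (eulerian p i : ℝ) * z ^ (i + 1)) := by
  obtain ⟨q, rfl⟩ := Nat.exists_eq_add_of_le' hp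
  have termwise : ∀ ik ∈ antidiagonal q, HasSum
      (fun n : ℕ => (eulerian (q + 1) ik.1 : ℝ) * ((n + ik.2).choose (q + 1) * z ^ n))
      ((eulerian (q + 1) ik.1 : ℝ) * (z ^ (ik.1 + 1) / (1 - z) ^ (q + 1 + 1))) := by
    rintro ⟨i, k⟩ hik
    obtain rfl : i + k = q := mem_antidiagonal.1 hik
    have h := hasSum_add_choose_mul_geometric k (i + 1) (z := z) (by rwa [Real.norm_eq_abs])
    rw [show k + (i + 1) = i + k + 1 by ring] at h
    exact h.mul_left _
  convert hasSum_sum termwise using 1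
  · ext n
    rw [← Nat.cast_pow, worpitzky q n, Nat.cast_sum, sum_mul]
    push_cast
    exact sum_congr rfl fun _ _ => by ring
  · rw [Nat.sum_antidiagonal_eq_sum_range_succ_mk, mul_sum]
    exact sum_congr rfl fun _ _ => by ring
end

section
/- For each natural number n define the polynomial S_n(z) := ∑_{k=0}^{n} C(n,k)^2 · z^k with rational coefficients. Then for every natural number n the three-term recurrence (n+1)·(1-z)^2·S_n(z) - (2n+3)·(z+1)·S_{n+1}(z) + (n+2)·S_{n+2}(z) = 0 holds as an identity in ℚ[z]. -/
/-!
Compare coefficients of `X ^ m`. Pascal's rule writes `C(n + 1, m)`, `C(n + 1, m - 1)` and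
`C(n + 2, m)` through `x = C(n, m - 2)`, `y = C(n, m - 1)`, `z = C(n, m)`, and the recurrence becomes
`n y² = y (x + z) + (n + 2) x z`. This follows from the ratios `x (n - m + 2) = y (m - 1)` and
`z m = y (n - m + 1)` of consecutive binomial coefficients.
-/

open Polynomial Finset

theorem Nat.mul_choose_succ_sq (n j : ℕ) :
    n * n.choose (j + 1) ^ 2 =
      n.choose (j + 1) * (n.choose j + n.choose (j + 2)) +
        (n + 2) * n.choose j * n.choose (j + 2) := by
  rcases le_or_gt (j + 1) n with h | h
  · obtain ⟨d, rfl⟩ := Nat.exists_eq_add_of_le h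
    have hz := Nat.choose_succ_right_eq (j + 1 + d) (j + 1)
    have hx := Nat.choose_succ_right_eq (j + 1 + d) j
    rw [show j + 1 + d - (j + 1) = d by omega] at hz
    rw [show j + 1 + d - j = d + 1 by omega] at hx
    refine Nat.eq_of_mul_eq_mul_left (show 0 < (j + 2) * (d + 1) by positivity) ?_
    set x := (j + 1 + d).choose j
    set y := (j + 1 + d).choose (j + 1)
    set z := (j + 1 + d).choose (j + 2)
    zify at hz hx ⊢
    linear_combination (y * (j + 2) + (j + d + 3) * y * d : ℤ) * hx
      - (y * (d + 1) + (j + d + 3) * x * (d + 1) : ℤ) * hz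
  · simp [Nat.choose_eq_zero_of_lt h, Nat.choose_eq_zero_of_lt (show n < j + 2 by omega)]

noncomputable def binomSqPoly (R : Type*) [Semiring R] (n : ℕ) : R[X] :=
  ∑ k ∈ range (n + 1), C ((n.choose k : R) ^ 2) * X ^ k

section

variable {R : Type*}

theorem coeff_binomSqPoly [Semiring R] (n m : ℕ) :
    (binomSqPoly R n).coeff m = (n.choose m : R) ^ 2 := by
  rw [binomSqPoly, finsetSum_coeff]
  simp only [coeff_C_mul_X_pow, sum_ite_eq, mem_range]
  split_ifs with h
  · rfl
  · simp [Nat.choose_eq_zero_of_lt (not_lt.mp h)]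

theorem binomSqPoly_recurrence [CommRing R] (n : ℕ) :
    C ((n : R) + 1) * (1 - X) ^ 2 * binomSqPoly R n
      - C (2 * (n : R) + 3) * (X + 1) * binomSqPoly R (n + 1)
      + C ((n : R) + 2) * binomSqPoly R (n + 2) = 0 := by
  set A := binomSqPoly R n
  set B := binomSqPoly R (n + 1)
  have expand : C ((n : R) + 1) * (1 - X) ^ 2 * A - C (2 * (n : R) + 3) * (X + 1) * B =
      C ((n : R) + 1) * (A - 2 * (X * A) + X * (X * A)) - C (2 * (n : R) + 3) * (X * B + B) := by
    ring
  rw [expand]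
  ext (_ | _ | j) <;>
    simp only [coeff_add, coeff_sub, coeff_C_mul, coeff_X_mul, coeff_X_mul_zero, coeff_ofNat_mul,
      coeff_binomSqPoly, coeff_zero, A, B]
  · simp only [Nat.choose_zero_right]
    push_cast
    ring
  · simp only [Nat.choose_zero_right, zero_add, Nat.choose_one_right]
    push_cast
    ring
  · have key := congrArg (Nat.cast : ℕ → R) (Nat.mul_choose_succ_sq n j)
    rw [Nat.choose_succ_succ (n + 1), Nat.choose_succ_succ n, Nat.choose_succ_succ n]
    push_cast at key ⊢
    linear_combination (-2 : R) * key

end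

theorem legendre_binom_sq_recurrence (n : ℕ) :
    Polynomial.C ((n : ℚ) + 1) * (1 - Polynomial.X) ^ 2 *
        (∑ k ∈ Finset.range (n + 1),
          Polynomial.C ((n.choose k : ℚ) ^ 2) * Polynomial.X ^ k) -
      Polynomial.C (2 * (n : ℚ) + 3) * (Polynomial.X + 1) *
        (∑ k ∈ Finset.range (n + 2),
          Polynomial.C (((n + 1).choose k : ℚ) ^ 2) * Polynomial.X ^ k) +
      Polynomial.C ((n : ℚ) + 2) *
        (∑ k ∈ Finset.range (n + 3),
          Polynomial.C (((n + 2).choose k : ℚ) ^ 2) * Polynomial.X ^ k) = 0 :=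
  binomSqPoly_recurrence n
end

section
/- For every natural number n, C(2n,n) · B_n / (n+1) = ∑_{k=0}^{n} S(n+k, k) · C(2n, n+k) · (-1)^k / (k+1), as an identity of rational numbers. -/
/-!
For fixed `n`, `k ↦ S(n + k, k)` is a polynomial `Fₙ` of degree `2n`: comparing coefficients in the
logarithmic derivative of `∑ₙ S(n + k, k) Xⁿ = ∏_{j ≤ k} (1 - j X)⁻¹` expresses `n S(n + k, k)`
through the power sums `∑_{i ≤ k} iᵐ`, i.e. through Faulhaber's polynomials. The recurrence of the
Stirling numbers then shows that `Fₙ` vanishes at `0, -1, …, -n` and that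
`Fₙ'(-1) = Fₙ'(0) - [n = 1] = Bₙ / n`. Hence `Fₙ / (X + 1)` has degree `< 2n`, so its `2n`-th
central difference vanishes, and among its values at `-1, …, -n` only the one at `-1`, namely
`Bₙ / n`, is nonzero.
-/

open Finset

theorem stirling2_eq_stirlingSecond : stirling2 = Nat.stirlingSecond := by
  funext n k
  induction n generalizing k with
  | zero => cases k <;> rfl
  | succ n ih =>
    cases k with
    | zero => rfl
    | succ k => simp only [stirling2, Nat.stirlingSecond_succ_succ, ih]

namespace PowerSeries

variable (R : Type*) [CommRing R]

/-- `∑ₙ S(n + k, k) Xⁿ = ∏_{j ≤ k} (1 - j X)⁻¹`. -/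
noncomputable def stirlingSecondColumn (k : ℕ) : R⟦X⟧ :=
  mk fun n => (Nat.stirlingSecond (n + k) k : R)

/-- `∑_{j ≤ k} j / (1 - j X)`, the logarithmic derivative of `stirlingSecondColumn R k`. -/
noncomputable def powerSumSeries (k : ℕ) : R⟦X⟧ :=
  mk fun m => ∑ i ∈ range (k + 1), (i : R) ^ (m + 1)

variable {R}

lemma coeff_succ_one_sub_C_mul_X_mul (c : R) (f : R⟦X⟧) (n : ℕ) :
    coeff (n + 1) ((1 - C c * X) * f) = coeff (n + 1) f - c * coeff n f := by
  rw [sub_mul, one_mul, mul_assoc, map_sub, coeff_C_mul, coeff_succ_X_mul]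

lemma isUnit_one_sub_C_mul_X (c : R) : IsUnit (1 - C c * X) := by
  simp [isUnit_iff_constantCoeff]

theorem stirlingSecondColumn_zero : stirlingSecondColumn R 0 = 1 := by
  ext (_ | n) <;> simp [stirlingSecondColumn, coeff_one]

theorem one_sub_mul_stirlingSecondColumn_succ (k : ℕ) :
    (1 - C (k + 1 : R) * X) * stirlingSecondColumn R (k + 1) = stirlingSecondColumn R k := by
  ext (_ | n)
  · simp [stirlingSecondColumn, Nat.stirlingSecond_self]
  · rw [coeff_succ_one_sub_C_mul_X_mul]
    simp only [stirlingSecondColumn, coeff_mk, show n + 1 + (k + 1) = n + (k + 1) + 1 by omega,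
      show n + 1 + k = n + (k + 1) by omega, Nat.stirlingSecond_succ_succ]
    push_cast
    ring

theorem powerSumSeries_zero : powerSumSeries R 0 = 0 := by
  ext; simp [powerSumSeries]

theorem one_sub_mul_powerSumSeries_succ (k : ℕ) :
    (1 - C (k + 1 : R) * X) * powerSumSeries R (k + 1) =
      (1 - C (k + 1 : R) * X) * powerSumSeries R k + C (k + 1 : R) := by
  ext (_ | n)
  · simp [powerSumSeries, sum_range_succ _ (k + 1)]
  · rw [map_add (coeff (n + 1)), coeff_succ_one_sub_C_mul_X_mul, coeff_succ_one_sub_C_mul_X_mul,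
      coeff_C]
    simp only [powerSumSeries, coeff_mk, sum_range_succ _ (k + 1)]
    push_cast
    ring

theorem derivative_stirlingSecondColumn (k : ℕ) :
    d⁄dX R (stirlingSecondColumn R k) = stirlingSecondColumn R k * powerSumSeries R k := by
  induction k with
  | zero => simp [stirlingSecondColumn_zero, powerSumSeries_zero]
  | succ k ih =>
    set U : R⟦X⟧ := 1 - C (k + 1 : R) * X
    set F := stirlingSecondColumn R (k + 1)
    have hF : U * F = stirlingSecondColumn R k := one_sub_mul_stirlingSecondColumn_succ k
    have hdU : d⁄dX R U = -C (k + 1 : R) := by simp [U]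
    have hdF : U * d⁄dX R F = C (k + 1 : R) * F + U * F * powerSumSeries R k := by
      have := congrArg (d⁄dX R) hF
      rw [Derivation.leibniz, hdU, ih, ← hF, smul_eq_mul, smul_eq_mul] at this
      linear_combination this
    refine (isUnit_one_sub_C_mul_X (k + 1 : R)).mul_left_cancel ?_
    rw [hdF, mul_left_comm, one_sub_mul_powerSumSeries_succ]
    ring

end PowerSeries

theorem Nat.succ_mul_stirlingSecond_add {R : Type*} [CommRing R] (n k : ℕ) :
    (n + 1 : R) * stirlingSecond (n + 1 + k) k =
      ∑ m ∈ range (n + 1),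
        (∑ i ∈ range (k + 1), (i : R) ^ (n + 1 - m)) * stirlingSecond (m + k) k := by
  have h := congrArg (PowerSeries.coeff n) (PowerSeries.derivative_stirlingSecondColumn (R := R) k)
  rw [PowerSeries.coeff_derivative, PowerSeries.coeff_mul,
    Nat.sum_antidiagonal_eq_sum_range_succ_mk] at h
  simp only [PowerSeries.stirlingSecondColumn, PowerSeries.powerSumSeries,
    PowerSeries.coeff_mk] at h
  rw [mul_comm, h]
  refine sum_congr rfl fun m hm => ?_
  rw [mul_comm, show n - m + 1 = n + 1 - m by have := mem_range.mp hm; omega]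

theorem Nat.choose_two_mul_self_mul (n : ℕ) :
    (2 * n).choose n * n = (2 * n).choose (n + 1) * (n + 1) := by
  simpa [show 2 * n - n = n by omega] using (Nat.choose_succ_right_eq (2 * n) n).symm

theorem neg_one_pow_two_mul_sub {R : Type*} [Ring R] {n i : ℕ} (hi : i ≤ 2 * n) :
    (-1 : R) ^ (2 * n - i) = (-1) ^ i := by
  rw [neg_one_pow_eq_pow_mod_two, show (2 * n - i) % 2 = i % 2 by omega,
    ← neg_one_pow_eq_pow_mod_two]

namespace Polynomial

theorem eq_of_eval_natCast_eq {R : Type*} [CommRing R] [IsDomain R] [CharZero R] {p q : R[X]}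
    (h : ∀ k : ℕ, p.eval (k : R) = q.eval (k : R)) : p = q :=
  eq_of_infinite_eval_eq p q <| (Set.infinite_range_of_injective Nat.cast_injective).mono <| by
    rintro _ ⟨k, rfl⟩
    exact h k

/-- The `2n`-th central difference of a polynomial of degree `< 2n` vanishes, written as a
relation between its values at `0, …, n` and at `-1, …, -n`. -/
theorem sum_neg_one_pow_mul_choose_mul_eval {R : Type*} [CommRing R] {p : R[X]}
    {n : ℕ} (hp : p.natDegree < 2 * n) :
    ∑ k ∈ range (n + 1), (-1) ^ k * ((2 * n).choose (n + k) : R) * p.eval (k : R) =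
      ∑ j ∈ range n, (-1) ^ j * ((2 * n).choose (n + 1 + j) : R) * p.eval (-(j + 1) : R) := by
  have h := fwdDiff_iter_eq_sum_shift (1 : R) p.eval (2 * n) (-n)
  rw [fwdDiff_iter_eq_zero_of_degree_lt hp, show 2 * n + 1 = n + (n + 1) by ring, sum_range_add,
    ← sum_range_reflect] at h
  have hlow : ∀ j ∈ range n,
      ((-1 : ℤ) ^ (2 * n - (n - 1 - j)) * (2 * n).choose (n - 1 - j)) •
        p.eval (-(n : R) + (n - 1 - j) • 1) =
      -(-1) ^ n * ((-1) ^ j * ((2 * n).choose (n + 1 + j) : R) * p.eval (-(j + 1) : R)) := by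
    intro j hj
    have hj : j < n := mem_range.mp hj
    rw [show 2 * n - (n - 1 - j) = n + 1 + j by omega,
      Nat.choose_symm_of_eq_add (show 2 * n = n - 1 - j + (n + 1 + j) by omega), zsmul_eq_mul,
      nsmul_one, Nat.cast_sub (by omega), Nat.cast_sub (by omega)]
    push_cast
    ring_nf
  have hhigh : ∀ k ∈ range (n + 1),
      ((-1 : ℤ) ^ (2 * n - (n + k)) * (2 * n).choose (n + k)) • p.eval (-(n : R) + (n + k) • 1) =
      (-1) ^ n * ((-1) ^ k * ((2 * n).choose (n + k) : R) * p.eval (k : R)) := by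
    intro k hk
    have hk : k < n + 1 := mem_range.mp hk
    rw [neg_one_pow_two_mul_sub (by omega), zsmul_eq_mul, nsmul_one]
    push_cast
    ring_nf
  rw [sum_congr rfl hlow, sum_congr rfl hhigh, ← mul_sum, ← mul_sum, Pi.zero_apply] at h
  refine (isUnit_one.neg.pow n).mul_left_cancel ?_
  linear_combination -h

noncomputable def powerSumPoly (m : ℕ) : ℚ[X] :=
  C (m + 1 : ℚ)⁻¹ * ((bernoulli (m + 1)).comp (X + 1) - C (_root_.bernoulli (m + 1)))

theorem powerSumPoly_eval_natCast (m k : ℕ) :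
    (powerSumPoly m).eval (k : ℚ) = ∑ i ∈ range (k + 1), (i : ℚ) ^ m := by
  have h := sum_range_pow_eq_bernoulli_sub (k + 1) m
  rw [powerSumPoly, eval_mul, eval_C, eval_sub, eval_comp, eval_add, eval_X, eval_one, eval_C]
  push_cast at h
  rw [← h, inv_mul_cancel_left₀ (by positivity)]

theorem natDegree_bernoulli_le (n : ℕ) : (bernoulli n).natDegree ≤ n := by
  rw [bernoulli_def]
  exact natDegree_sum_le_of_forall_le _ _ fun i hi =>
    (natDegree_monomial_le _).trans (Nat.lt_succ_iff.mp (mem_range.mp hi))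

theorem natDegree_powerSumPoly_le (m : ℕ) : (powerSumPoly m).natDegree ≤ m + 1 := by
  unfold powerSumPoly
  refine (natDegree_C_mul_le _ _).trans ?_
  rw [natDegree_sub_C, natDegree_comp, ← C_1, natDegree_X_add_C, mul_one]
  exact natDegree_bernoulli_le (m + 1)

theorem powerSumPoly_eval_zero {m : ℕ} (hm : m ≠ 0) : (powerSumPoly m).eval 0 = 0 := by
  simpa [hm] using powerSumPoly_eval_natCast m 0

theorem derivative_powerSumPoly_eval_zero (m : ℕ) :
    (derivative (powerSumPoly m)).eval 0 = bernoulli' m := by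
  simp [powerSumPoly, derivative_comp, derivative_bernoulli_add_one, bernoulli_eval_one,
    inv_mul_cancel_left₀ (by positivity : (m + 1 : ℚ) ≠ 0)]

/-- The polynomial `Fₙ` with `Fₙ(k) = S(n + k, k)`, defined by the recurrence that
`Nat.succ_mul_stirlingSecond_add` gives for the values. -/
noncomputable def stirlingSecondPoly : ℕ → ℚ[X]
  | 0 => 1
  | n + 1 => C (n + 1 : ℚ)⁻¹ * ∑ m : Fin (n + 1), powerSumPoly (n + 1 - m) * stirlingSecondPoly m

theorem stirlingSecondPoly_zero : stirlingSecondPoly 0 = 1 := by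
  rw [stirlingSecondPoly]

theorem stirlingSecondPoly_succ (n : ℕ) :
    stirlingSecondPoly (n + 1) =
      C (n + 1 : ℚ)⁻¹ * ∑ m ∈ range (n + 1), powerSumPoly (n + 1 - m) * stirlingSecondPoly m := by
  rw [stirlingSecondPoly,
    Fin.sum_univ_eq_sum_range fun m => powerSumPoly (n + 1 - m) * stirlingSecondPoly m]

theorem stirlingSecondPoly_eval_natCast (n k : ℕ) :
    (stirlingSecondPoly n).eval (k : ℚ) = Nat.stirlingSecond (n + k) k := by
  induction n using Nat.strong_induction_on with
  | _ n ih =>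
    cases n with
    | zero => simp [stirlingSecondPoly_zero, Nat.stirlingSecond_self]
    | succ n =>
      rw [stirlingSecondPoly_succ, eval_mul, eval_C, eval_finsetSum,
        sum_congr rfl fun m hm => by
          rw [eval_mul, powerSumPoly_eval_natCast, ih m (by have := mem_range.mp hm; omega)],
        ← Nat.succ_mul_stirlingSecond_add, inv_mul_cancel_left₀ (by positivity)]

theorem natDegree_stirlingSecondPoly_le (n : ℕ) : (stirlingSecondPoly n).natDegree ≤ 2 * n := by
  induction n using Nat.strong_induction_on with
  | _ n ih =>
    cases n with
    | zero => simp [stirlingSecondPoly_zero]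
    | succ n =>
      rw [stirlingSecondPoly_succ]
      refine (natDegree_C_mul_le _ _).trans <| natDegree_sum_le_of_forall_le _ _ fun m hm => ?_
      have hm : m < n + 1 := mem_range.mp hm
      have := natDegree_powerSumPoly_le (n + 1 - m)
      have := ih m hm
      exact natDegree_mul_le.trans (by omega)

theorem stirlingSecondPoly_eval_zero {n : ℕ} (hn : n ≠ 0) : (stirlingSecondPoly n).eval 0 = 0 := by
  obtain ⟨n, rfl⟩ := Nat.exists_eq_succ_of_ne_zero hn
  simpa using stirlingSecondPoly_eval_natCast (n + 1) 0

theorem derivative_stirlingSecondPoly_eval_zero {n : ℕ} (hn : n ≠ 0) :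
    (derivative (stirlingSecondPoly n)).eval 0 = bernoulli' n / n := by
  obtain ⟨n, rfl⟩ := Nat.exists_eq_succ_of_ne_zero hn
  rw [stirlingSecondPoly_succ, derivative_C_mul, derivative_sum, eval_mul, eval_C,
    eval_finsetSum, sum_eq_single 0]
  · simp [stirlingSecondPoly_zero, derivative_powerSumPoly_eval_zero, div_eq_inv_mul]
  · intro m hm hm0
    rw [derivative_mul, eval_add, eval_mul, eval_mul, stirlingSecondPoly_eval_zero hm0,
      powerSumPoly_eval_zero (by have := mem_range.mp hm; omega), mul_zero, zero_mul, add_zero]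
  · simp

theorem stirlingSecondPoly_comp_X_add_one_sub (n : ℕ) :
    (stirlingSecondPoly (n + 1)).comp (X + 1) - stirlingSecondPoly (n + 1) =
      (X + 1) * (stirlingSecondPoly n).comp (X + 1) := by
  refine eq_of_eval_natCast_eq fun k => ?_
  simp only [eval_sub, eval_mul, eval_comp, eval_add, eval_X, eval_one]
  rw [← Nat.cast_succ, stirlingSecondPoly_eval_natCast, stirlingSecondPoly_eval_natCast,
    stirlingSecondPoly_eval_natCast, show n + 1 + (k + 1) = n + (k + 1) + 1 by omega,
    show n + 1 + k = n + (k + 1) by omega, Nat.stirlingSecond_succ_succ]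
  push_cast
  ring

theorem stirlingSecondPoly_eval_neg_natCast {n a : ℕ} (hn : n ≠ 0) (ha : a ≤ n) :
    (stirlingSecondPoly n).eval (-a : ℚ) = 0 := by
  induction n generalizing a with
  | zero => exact absurd rfl hn
  | succ n ihn =>
    induction a with
    | zero => simpa using stirlingSecondPoly_eval_zero hn
    | succ a iha =>
      have h := congrArg (eval (-(a + 1) : ℚ)) (stirlingSecondPoly_comp_X_add_one_sub n)
      simp only [eval_sub, eval_mul, eval_comp, eval_add, eval_X, eval_one] at h
      rw [show (-(a + 1) + 1 : ℚ) = -a by ring] at h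
      have hprev : (-a : ℚ) * (stirlingSecondPoly n).eval (-a : ℚ) = 0 := by
        rcases Nat.eq_zero_or_pos a with rfl | ha0
        · simp
        · rw [ihn (by omega) (by omega), mul_zero]
      push_cast
      rw [iha (by omega), hprev] at h
      linear_combination -h

theorem derivative_stirlingSecondPoly_eval_neg_one {n : ℕ} (hn : n ≠ 0) :
    (derivative (stirlingSecondPoly n)).eval (-1) = _root_.bernoulli n / n := by
  obtain ⟨n, rfl⟩ := Nat.exists_eq_succ_of_ne_zero hn
  have h := congrArg (fun p => (derivative p).eval (-1 : ℚ))
    (stirlingSecondPoly_comp_X_add_one_sub n)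
  simp only [derivative_sub, derivative_mul, derivative_comp, eval_sub, eval_add, eval_mul,
    eval_comp, derivative_add, derivative_X, derivative_one, eval_X, eval_one, add_zero,
    neg_add_cancel, zero_mul, one_mul] at h
  rw [derivative_stirlingSecondPoly_eval_zero hn] at h
  rcases Nat.eq_zero_or_pos n with rfl | hn0
  -- `F₀(0) = 1` is exactly the gap between `bernoulli' 1 = 1/2` and `bernoulli 1 = -1/2`.
  · rw [stirlingSecondPoly_zero, eval_one, bernoulli'_one] at h
    rw [_root_.bernoulli_one]
    linear_combination -h
  · rw [stirlingSecondPoly_eval_zero hn0.ne', bernoulli_eq_bernoulli'_of_ne_one (by omega)] at *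
    linear_combination -h

noncomputable def stirlingSecondQuot (n : ℕ) : ℚ[X] :=
  stirlingSecondPoly n /ₘ (X + 1)

theorem X_add_one_mul_stirlingSecondQuot {n : ℕ} (hn : n ≠ 0) :
    (X + 1) * stirlingSecondQuot n = stirlingSecondPoly n := by
  have hroot : (stirlingSecondPoly n).IsRoot (-1) := by
    simpa using stirlingSecondPoly_eval_neg_natCast hn (a := 1) (by omega)
  simpa [stirlingSecondQuot] using mul_divByMonic_eq_iff_isRoot.mpr hroot

theorem natDegree_stirlingSecondQuot_lt {n : ℕ} (hn : n ≠ 0) :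
    (stirlingSecondQuot n).natDegree < 2 * n := by
  have := natDegree_stirlingSecondPoly_le n
  rw [stirlingSecondQuot, natDegree_divByMonic _ (by monicity),
    show (X + 1 : ℚ[X]).natDegree = 1 by compute_degree!]
  omega

theorem stirlingSecondQuot_eval_natCast {n : ℕ} (hn : n ≠ 0) (k : ℕ) :
    (stirlingSecondQuot n).eval (k : ℚ) = Nat.stirlingSecond (n + k) k / (k + 1) := by
  have h := congrArg (eval (k : ℚ)) (X_add_one_mul_stirlingSecondQuot hn)
  rw [eval_mul, eval_add, eval_X, eval_one, stirlingSecondPoly_eval_natCast] at h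
  rw [← h, mul_div_cancel_left₀ _ (by positivity)]

theorem stirlingSecondQuot_eval_neg_one {n : ℕ} (hn : n ≠ 0) :
    (stirlingSecondQuot n).eval (-1) = _root_.bernoulli n / n := by
  have h := congrArg (fun p => (derivative p).eval (-1 : ℚ)) (X_add_one_mul_stirlingSecondQuot hn)
  simpa [derivative_stirlingSecondPoly_eval_neg_one hn] using h

theorem stirlingSecondQuot_eval_neg_natCast {n a : ℕ} (hn : n ≠ 0) (ha : 2 ≤ a) (han : a ≤ n) :
    (stirlingSecondQuot n).eval (-a : ℚ) = 0 := by
  have h := congrArg (eval (-a : ℚ)) (X_add_one_mul_stirlingSecondQuot hn)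
  rw [eval_mul, stirlingSecondPoly_eval_neg_natCast hn han, mul_eq_zero] at h
  refine h.resolve_left fun h1 => ?_
  simp only [eval_add, eval_X, eval_one, neg_add_eq_zero] at h1
  norm_cast at h1
  omega

end Polynomial

theorem catalan_bernoulli_stirling2 (n : ℕ) :
    ((2 * n).choose n : ℚ) * bernoulli n / ((n : ℚ) + 1) =
      ∑ k ∈ Finset.range (n + 1),
        (stirling2 (n + k) k : ℚ) * ((2 * n).choose (n + k) : ℚ) *
          (-1 : ℚ) ^ k / ((k : ℚ) + 1) := by
  rcases eq_or_ne n 0 with rfl | hn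
  · simp [stirling2]
  have hchoose : ((2 * n).choose n : ℚ) * n = (2 * n).choose (n + 1) * (n + 1) := by
    exact_mod_cast Nat.choose_two_mul_self_mul n
  open Polynomial in
  calc ((2 * n).choose n : ℚ) * _root_.bernoulli n / (n + 1)
      = (2 * n).choose (n + 1) * (stirlingSecondQuot n).eval (-1) := by
        rw [stirlingSecondQuot_eval_neg_one hn]
        field_simp
        linear_combination _root_.bernoulli n * hchoose
    _ = ∑ j ∈ range n, (-1) ^ j * ((2 * n).choose (n + 1 + j) : ℚ) *
          (stirlingSecondQuot n).eval (-(j + 1) : ℚ) := by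
        rw [sum_eq_single_of_mem 0 (mem_range.mpr (Nat.pos_of_ne_zero hn))]
        · simp
        · intro j hj hj0
          rw [show (-(j + 1) : ℚ) = -(j + 1 : ℕ) by push_cast; rfl,
            stirlingSecondQuot_eval_neg_natCast hn (by omega) (mem_range.mp hj), mul_zero]
    _ = ∑ k ∈ range (n + 1), (-1) ^ k * ((2 * n).choose (n + k) : ℚ) *
          (stirlingSecondQuot n).eval (k : ℚ) :=
        (sum_neg_one_pow_mul_choose_mul_eval (natDegree_stirlingSecondQuot_lt hn)).symm
    _ = _ := by
        refine sum_congr rfl fun k _ => ?_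
        rw [stirlingSecondQuot_eval_natCast hn, stirling2_eq_stirlingSecond]
        ring
end

section
/- For every natural number n and every real number x, x^n = ∑_{k=0}^{n} A(n,k) · binom(x+k, n), where binom(y, n) := (∏_{t=0}^{n-1} (y - t)) / n! is the generalized binomial coefficient of a real number y. -/
/-!
Multiplying the identity for `n` by `x` and using
`x · C(x+k, n) = (k+1) · C(x+k, n+1) + (n-k) · C(x+k+1, n+1)` termwise turns it into
`∑ₖ A(n,k) ((k+1) C(x+k, n+1) + (n-k) C(x+k+1, n+1))`; collecting the coefficient of each
`C(x+k, n+1)` gives exactly the Eulerian recurrence, so induction on `n` closes the argument.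
-/

open Finset

section Eulerian

lemma eulerian_succ_zero (n : ℕ) : eulerian (n + 1) 0 = eulerian n 0 := rfl

lemma eulerian_eq_zero_of_le : ∀ {n m : ℕ}, n ≤ m → eulerian n (m + 1) = 0
  | 0, _, _ => rfl
  | n + 1, m, h => by
    show (m + 2) * eulerian n (m + 1) + (n - m) * eulerian n m = 0
    rw [eulerian_eq_zero_of_le (by omega : n ≤ m), Nat.sub_eq_zero_of_le (by omega)]
    ring

variable {K : Type*} [CommRing K]

/-- Read in `K`, the factor `n - k` needs no truncation: for `k > n` both terms on the right
vanish. -/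
lemma eulerian_succ_succ_cast (n k : ℕ) :
    (eulerian (n + 1) (k + 1) : K) =
      (k + 2) * eulerian n (k + 1) + ((n : K) - k) * eulerian n k := by
  show ((((k + 2) * eulerian n (k + 1) + (n - k) * eulerian n k : ℕ)) : K) = _
  rcases le_or_gt k n with hkn | hnk
  · push_cast [Nat.cast_sub hkn]
    ring
  · obtain ⟨m, rfl⟩ : ∃ m, k = m + 1 := ⟨k - 1, by omega⟩
    simp [eulerian_eq_zero_of_le (by omega : n ≤ m),
      eulerian_eq_zero_of_le (by omega : n ≤ m + 1)]

lemma sum_eulerian_succ_mul (n : ℕ) (f : ℕ → K) :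
    ∑ k ∈ range (n + 2), (eulerian (n + 1) k : K) * f k =
      ∑ k ∈ range (n + 1),
        (eulerian n k : K) * ((k + 1) * f k + ((n : K) - k) * f (k + 1)) := by
  have hextend : ∑ k ∈ range (n + 1), (eulerian n k : K) * ((k + 1) * f k) =
      ∑ k ∈ range (n + 2), (eulerian n k : K) * ((k + 1) * f k) := by
    simp [sum_range_succ _ (n + 1), eulerian_eq_zero_of_le le_rfl]
  calc ∑ k ∈ range (n + 2), (eulerian (n + 1) k : K) * f k
      = ∑ k ∈ range (n + 1), (eulerian n (k + 1) : K) * ((k + 1 + 1) * f (k + 1)) +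
          eulerian n 0 * ((0 + 1) * f 0) +
          ∑ k ∈ range (n + 1), (eulerian n k : K) * (((n : K) - k) * f (k + 1)) := by
        rw [sum_range_succ', add_right_comm, ← sum_add_distrib]
        simp only [eulerian_succ_succ_cast, eulerian_succ_zero]
        congr 1
        · exact sum_congr rfl fun k _ => by ring
        · ring
    _ = ∑ k ∈ range (n + 1), (eulerian n k : K) * ((k + 1) * f k) +
          ∑ k ∈ range (n + 1), (eulerian n k : K) * (((n : K) - k) * f (k + 1)) := by
        rw [hextend, sum_range_succ' _ (n + 1)]
        push_cast
        rfl
    _ = _ := by simp only [mul_add, sum_add_distrib]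

end Eulerian

section Binomial

variable {K : Type*} [Field K] [CharZero K]

def binom (y : K) (n : ℕ) : K :=
  (∏ t ∈ range n, (y - t)) / n.factorial

lemma binom_succ (y : K) (n : ℕ) : binom y (n + 1) = binom y n * (y - n) / (n + 1) := by
  rw [binom, binom, prod_range_succ, Nat.factorial_succ]
  push_cast
  field_simp

lemma binom_add_one_succ (y : K) (n : ℕ) :
    binom (y + 1) (n + 1) = binom y n * (y + 1) / (n + 1) := by
  have hprod : ∏ t ∈ range n, (y + 1 - (t + 1 : ℕ)) = ∏ t ∈ range n, (y - t) :=
    prod_congr rfl fun t _ => by push_cast; ring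
  rw [binom, binom, prod_range_succ', hprod, Nat.factorial_succ]
  push_cast
  field_simp
  ring

lemma sub_mul_binom (y k : K) (n : ℕ) :
    (y - k) * binom y n = (k + 1) * binom y (n + 1) + (n - k) * binom (y + 1) (n + 1) := by
  rw [binom_succ, binom_add_one_succ]
  field_simp
  ring

end Binomial

lemma pow_eq_sum_eulerian_mul_binom {K : Type*} [Field K] [CharZero K] (n : ℕ) (x : K) :
    x ^ n = ∑ k ∈ range (n + 1), (eulerian n k : K) * binom (x + k) n := by
  induction n with
  | zero => simp [eulerian, binom]
  | succ n ih =>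
    calc x ^ (n + 1)
        = ∑ k ∈ range (n + 1), (eulerian n k : K) * ((x + k - k) * binom (x + k) n) := by
          simp only [add_sub_cancel_right, mul_left_comm _ x, ← mul_sum, ← ih, pow_succ']
      _ = ∑ k ∈ range (n + 2), (eulerian (n + 1) k : K) * binom (x + k) (n + 1) := by
          simp only [sub_mul_binom, sum_eulerian_succ_mul, Nat.cast_add_one, add_assoc]

theorem worpitzky_identity (n : ℕ) (x : ℝ) :
    x ^ n =
      ∑ k ∈ Finset.range (n + 1),
        (eulerian n k : ℝ) *
          ((∏ t ∈ Finset.range n, (x + (k : ℝ) - (t : ℝ))) / (n.factorial : ℝ)) :=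
  pow_eq_sum_eulerian_mul_binom n x
end
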